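/- Under gradient flow over the hierarchical tensor factorization objective, assume the unbalancedness magnitude at initialization (time t = 0) is zero. Then for every ν ∈ int(T), r ∈ [R_ν], and t ≥ 0: d/dt σ^(ν,r)(t) = σ^(ν,r)(t)^{2 − 2/L_ν} · L_ν · ⟨−∇L_H(W_H(t)), Ĉ^(ν,r)(t)⟩, where L_ν := |C(ν)| + 1 is the number of weight vectors in a local component at node ν and ⟨·,·⟩ is the Frobenius inner product. -/

import Mathlib

namespace HTF

/-- Rooted tree whose leaves are labeled by elements of `Fin N`. -/
inductive MTree (N : ℕ) : Type
  | leaf : Fin N → MTree N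
  | node : List (MTree N) → MTree N

noncomputable instance {N : ℕ} : DecidableEq (MTree N) := fun _ _ => Classical.dec _

namespace MTree

variable {N : ℕ}

/-- The list of leaf labels of the tree. -/
def leafList : MTree N → List (Fin N)
  | .leaf i => [i]
  | .node ts => ts.attach.flatMap fun t => t.1.leafList
decreasing_by simp only [MTree.node.sizeOf_spec]; have := List.sizeOf_lt_of_mem t.2; omega

/-- The label of a node: set of leaf indices appearing in its subtree. -/
def label (t : MTree N) : Finset (Fin N) := t.leafList.toFinset

/-- All nodes (subtrees) of the tree. -/
def nodes : MTree N → List (MTree N)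
  | .leaf i => [.leaf i]
  | .node ts => .node ts :: ts.attach.flatMap fun t => t.1.nodes
decreasing_by simp only [MTree.node.sizeOf_spec]; have := List.sizeOf_lt_of_mem t.2; omega

/-- The children of a node. -/
def children : MTree N → List (MTree N)
  | .leaf _ => []
  | .node ts => ts

/-- Interior (non-leaf) node. -/
def IsInterior : MTree N → Prop
  | .leaf _ => False
  | .node _ => True

/-- Every non-leaf node has at least one child. -/
def Branching : MTree N → Prop
  | .leaf _ => True
  | .node ts => ts ≠ [] ∧ ∀ t ∈ ts.attach, Branching t.1
decreasing_by simp only [MTree.node.sizeOf_spec]; have := List.sizeOf_lt_of_mem t.2; omega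

/-- A valid mode tree over `[N]`: it has exactly `N` leaves, labeled `{1},...,{N}`
(each index appearing exactly once), and interior nodes have children. -/
def Valid (t : MTree N) : Prop :=
  t.leafList.Nodup ∧ (∀ i : Fin N, i ∈ t.leafList) ∧ t.Branching

/-- The parent of node `ν` in the tree (first argument), if it exists. -/
noncomputable def parentIn : MTree N → MTree N → Option (MTree N)
  | .leaf _, _ => none
  | .node ts, ν =>
      if ν ∈ ts then some (.node ts)
      else ts.attach.findSome? fun t => parentIn t.1 ν
termination_by T _ => sizeOf T
decreasing_by simp only [MTree.node.sizeOf_spec]; have := List.sizeOf_lt_of_mem t.2; omega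

end MTree

open MTree

variable {N : ℕ} (D : Fin N → ℕ)

/-- Full index set of an order-`N` tensor with mode dimensions `D`. -/
abbrev Idx : Type := ∀ n, Fin (D n)

/-- The intermediate tensors `W^(ν,r)` of a hierarchical tensor factorization with
local-component numbers `R` and weight matrices `W` (columns indexed by `ℕ`).
An order-`|label ν|` tensor is represented as a function of a full index tuple that
only depends on the coordinates in `label ν`; with this representation, the tensor
product of tensors over disjoint mode sets is pointwise multiplication and the mode
permutation `π_ν` is the identity. -/
noncomputable def interm (R : MTree N → ℕ) (W : ∀ ν : MTree N, Fin (R ν) → ℕ → ℝ) :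
    MTree N → ℕ → Idx D → ℝ
  | .leaf i, r => fun x =>
      if h : R (.leaf i) = D i then W (.leaf i) (Fin.cast h.symm (x i)) r else 0
  | .node ts, r => fun x =>
      ∑ r' : Fin (R (.node ts)),
        W (.node ts) r' r * (ts.attach.map fun t => interm R W t.1 (r' : ℕ) x).prod
decreasing_by simp only [MTree.node.sizeOf_spec]; have := List.sizeOf_lt_of_mem t.2; omega

/-- The end tensor `W_H` of the hierarchical tensor factorization with mode tree `T`. -/
noncomputable def endT (R : MTree N → ℕ) (W : ∀ ν : MTree N, Fin (R ν) → ℕ → ℝ)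
    (T : MTree N) : Idx D → ℝ :=
  interm D R W T 0

/-- Entry `(i, j)` of the weight matrix at node `ν` (zero outside the row range). -/
noncomputable def went (R : MTree N → ℕ) (W : ∀ ν : MTree N, Fin (R ν) → ℕ → ℝ)
    (ν : MTree N) (i j : ℕ) : ℝ :=
  if h : i < R ν then W ν ⟨i, h⟩ j else 0

/-- `R_{Pa(ν)}` : the number of local components at the parent of `ν` in `T`
(`1` if `ν` is the root). -/
noncomputable def Rpar (R : MTree N → ℕ) (T ν : MTree N) : ℕ :=
  if ν = T then 1 else ((parentIn T ν).map R).getD 0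

/-- Replace the weight matrix at node `μ` by `A`, keeping all other weight matrices. -/
noncomputable def replace (R : MTree N → ℕ) (W : ∀ ν : MTree N, Fin (R ν) → ℕ → ℝ)
    (μ : MTree N) (A : Fin (R μ) → ℕ → ℝ) : ∀ ν : MTree N, Fin (R ν) → ℕ → ℝ :=
  fun ν => if h : ν = μ then fun i j => A (Fin.cast (congrArg R h) i) j else W ν

/-- Frobenius (Euclidean) inner product of order-`N` tensors. -/
noncomputable def tinner (A B : Idx D → ℝ) : ℝ := ∑ x, A x * B x

/-- Frobenius norm of an order-`N` tensor. -/
noncomputable def tnorm (A : Idx D → ℝ) : ℝ := Real.sqrt (∑ x, (A x) ^ 2)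

/-- Frobenius norm of an order-`|s|` tensor represented as a function of a full index
tuple depending only on the coordinates in `s` (so that the sum over the full index
set over-counts each entry `∏_{n ∉ s} D n` times). -/
noncomputable def rnorm (s : Finset (Fin N)) (A : Idx D → ℝ) : ℝ :=
  Real.sqrt ((∑ x, (A x) ^ 2) / ∏ n ∈ sᶜ, (D n : ℝ))

/-- Squared norm of the `r`'th column of the weight matrix at node `c`. -/
noncomputable def colSq (R : MTree N → ℕ) (W : ∀ ν : MTree N, Fin (R ν) → ℕ → ℝ)
    (c : MTree N) (r : ℕ) : ℝ :=
  ∑ i : Fin (R c), (W c i r) ^ 2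

/-- Squared norm of the `r`'th row of the weight matrix at node `ν` of `T`. -/
noncomputable def rowSq (R : MTree N → ℕ) (W : ∀ ν : MTree N, Fin (R ν) → ℕ → ℝ)
    (T ν : MTree N) (r : ℕ) : ℝ :=
  ∑ j : Fin (Rpar R T ν), (went R W ν r (j : ℕ)) ^ 2

/-- `σ^(ν,r)` : the norm of the `(ν,r)`'th local component, i.e. the product of the
norms of the vectors in `LC(ν,r)` (the `r`'th row of `W^(ν)` together with the `r`'th
columns of the weight matrices of the children of `ν`). -/
noncomputable def sigmaLoc (R : MTree N → ℕ) (W : ∀ ν : MTree N, Fin (R ν) → ℕ → ℝ)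
    (T ν : MTree N) (r : ℕ) : ℝ :=
  Real.sqrt (rowSq R W T ν r) * (ν.children.map fun c => Real.sqrt (colSq R W c r)).prod

/-- `PadR_r(W^(ν)_{r,:})` : the matrix whose `r`'th row is the `r`'th row of `W^(ν)`
and whose other rows are zero. -/
noncomputable def padRow (R : MTree N → ℕ) (W : ∀ ν : MTree N, Fin (R ν) → ℕ → ℝ)
    (ν : MTree N) (r : ℕ) : Fin (R ν) → ℕ → ℝ :=
  fun i j => if (i : ℕ) = r then W ν i j else 0

/-- `PadC_r(W^(c)_{:,r})` : the matrix whose `r`'th column is the `r`'th column of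
`W^(c)` and whose other columns are zero. -/
noncomputable def padCol (R : MTree N → ℕ) (W : ∀ ν : MTree N, Fin (R ν) → ℕ → ℝ)
    (c : MTree N) (r : ℕ) : Fin (R c) → ℕ → ℝ :=
  fun i j => if j = r then W c i r else 0

/-- `Ĉ^(ν,r)` : the end tensor obtained by normalizing the `r`'th local component at
`ν` and setting all other local components at `ν` to zero, i.e. the end tensor computed
with `W^(ν)` replaced by `σ^{-1} · PadR_r(W^(ν)_{r,:})` (and `0` if `σ^(ν,r) = 0`). -/
noncomputable def hatC (R : MTree N → ℕ) (W : ∀ ν : MTree N, Fin (R ν) → ℕ → ℝ)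
    (T ν : MTree N) (r : ℕ) : Idx D → ℝ :=
  if sigmaLoc R W T ν r = 0 then 0
  else endT D R (replace R W ν fun i j =>
    if (i : ℕ) = r then (sigmaLoc R W T ν r)⁻¹ * W ν i j else 0) T

/-- The objective `φ_H = L_H ∘ (end tensor)`. -/
noncomputable def obj (L : (Idx D → ℝ) → ℝ) (R : MTree N → ℕ) (T : MTree N)
    (W : ∀ ν : MTree N, Fin (R ν) → ℕ → ℝ) : ℝ :=
  L (endT D R W T)

/-- Update the single entry `(i, j)` of the weight matrix at node `μ` to the value `s`. -/
noncomputable def upd (R : MTree N → ℕ) (W : ∀ ν : MTree N, Fin (R ν) → ℕ → ℝ)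
    (μ : MTree N) (i j : ℕ) (s : ℝ) : ∀ ν : MTree N, Fin (R ν) → ℕ → ℝ :=
  fun ν i' j' => if ν = μ ∧ (i' : ℕ) = i ∧ j' = j then s else W ν i' j'

/-- `∂φ_H/∂W^(μ)_{i,j}` : the partial derivative of the objective with respect to the
`(i,j)` entry of the weight matrix at node `μ`, at the point `W`. -/
noncomputable def dObj (L : (Idx D → ℝ) → ℝ) (R : MTree N → ℕ) (T : MTree N)
    (W : ∀ ν : MTree N, Fin (R ν) → ℕ → ℝ) (μ : MTree N) (i j : ℕ) : ℝ :=
  deriv (fun s : ℝ => obj D L R T (upd R W μ i j s)) (went R W μ i j)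

/-- `∇L(A)` : the gradient of a loss over tensors, entrywise. -/
noncomputable def tgrad (L : (Idx D → ℝ) → ℝ) (A : Idx D → ℝ) : Idx D → ℝ :=
  fun x => deriv (fun s : ℝ => L (Function.update A x s)) (A x)

/-- Local smoothness of the loss: its gradient is Lipschitz on compact sets. -/
def LocSmooth (L : (Idx D → ℝ) → ℝ) : Prop :=
  ∀ K : Set (Idx D → ℝ), IsCompact K → ∃ β : NNReal, LipschitzOnWith β (tgrad D L) K

/-- Gradient flow over the objective: each entry of each weight matrix moves against
its partial derivative. -/
def GradFlow (L : (Idx D → ℝ) → ℝ) (R : MTree N → ℕ) (T : MTree N)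
    (Wt : ℝ → ∀ ν : MTree N, Fin (R ν) → ℕ → ℝ) : Prop :=
  ∀ (ν : MTree N) (i : Fin (R ν)) (j : ℕ) (t : ℝ), 0 ≤ t →
    HasDerivAt (fun s : ℝ => Wt s ν i j) (- dObj D L R T (Wt t) ν (i : ℕ) j) t

/-- The matricization of an order-`N` tensor according to the index set `I` : the
matrix whose rows are indexed by the modes in `I` and whose columns are indexed by the
remaining modes. -/
noncomputable def matricize (I : Finset (Fin N)) (A : Idx D → ℝ) :
    Matrix (∀ i : {n // n ∈ I}, Fin (D i)) (∀ j : {n // n ∉ I}, Fin (D j)) ℝ :=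
  fun ρ κ => A fun n => if h : n ∈ I then ρ ⟨n, h⟩ else κ ⟨n, h⟩

/-- Frobenius norm of the weight matrix `W^(ν) ∈ ℝ^{R_ν × R_{Pa(ν)}}` at node `ν` of `T`. -/
noncomputable def wFro (R : MTree N → ℕ) (W : ∀ ν : MTree N, Fin (R ν) → ℕ → ℝ)
    (T ν : MTree N) : ℝ :=
  Real.sqrt (∑ i : Fin (R ν), ∑ j : Fin (Rpar R T ν), (W ν i (j : ℕ)) ^ 2)

/-- The weights obtained by pruning the `(ν,r)`'th local component: the `r`'th row of
`W^(ν)` and the `r`'th column of `W^(c)` for every child `c` of `ν` are set to zero. -/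
noncomputable def pruneLC (R : MTree N → ℕ) (W : ∀ ν : MTree N, Fin (R ν) → ℕ → ℝ)
    (ν : MTree N) (r : ℕ) : ∀ μ : MTree N, Fin (R μ) → ℕ → ℝ :=
  fun μ i j =>
    if μ = ν ∧ (i : ℕ) = r then 0
    else if μ ∈ ν.children ∧ j = r then 0
    else W μ i j

/-!
Each weight matrix occurs exactly once in the recursion defining the end tensor, so the end tensor
is linear in it and `∂φ_H/∂W^(μ)_{ij} = ⟨∇L_H(W_H), W_H[W^(μ) := E_{ij}]⟩`. Summing against the
`r`'th row of `W^(ν)` gives `d/dt ‖W^(ν)_{r,:}‖² = -2 ⟨∇L_H(W_H), σ^(ν,r) Ĉ^(ν,r)⟩`, and summing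
against the `r`'th column of `W^(c)` for a child `c` gives the same value, because keeping only that
column isolates the same local component as keeping only the row. Hence all vectors of `LC(ν,r)`
keep a common norm `v(t)`, `σ^(ν,r) = v^{L_ν}`, and the chain rule gives the formula when
`v(t) > 0`. When `v(t) = 0`, `σ^(ν,r)` is a product of at least two norms of vectors that are
differentiable and vanish at `t`, so it is `O((s - t)²)` and its derivative is `0`.
-/

namespace MTree

variable {N : ℕ} {t t' μ ν : MTree N} {ts : List (MTree N)}

@[elab_as_elim, induction_eliminator]
theorem induction_on' {motive : MTree N → Prop} (leaf : ∀ i, motive (.leaf i))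
    (node : ∀ ts, (∀ t ∈ ts, motive t) → motive (.node ts)) : ∀ t, motive t
  | .leaf i => leaf i
  | .node ts => node ts fun t _ => induction_on' leaf node t
decreasing_by simp only [MTree.node.sizeOf_spec]; have := List.sizeOf_lt_of_mem ‹t ∈ ts›; omega

theorem leafList_node (ts : List (MTree N)) : (node ts).leafList = ts.flatMap leafList := by
  rw [leafList, List.flatMap, List.flatMap, List.attach_map_val]

theorem mem_nodes_leaf {i : Fin N} : μ ∈ (leaf i).nodes ↔ μ = leaf i := by
  rw [nodes, List.mem_singleton]

theorem mem_nodes_node : μ ∈ (node ts).nodes ↔ μ = node ts ∨ ∃ t ∈ ts, μ ∈ t.nodes := by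
  rw [nodes, List.flatMap, List.attach_map_val, List.mem_cons, ← List.flatMap, List.mem_flatMap]

theorem branching_node : (node ts).Branching ↔ ts ≠ [] ∧ ∀ t ∈ ts, t.Branching := by
  rw [Branching]
  exact and_congr_right fun _ => ⟨fun h t ht => h ⟨t, ht⟩ (List.mem_attach _ _),
    fun h t _ => h t.1 t.2⟩

theorem mem_nodes_self : ∀ t : MTree N, t ∈ t.nodes
  | .leaf _ => mem_nodes_leaf.2 rfl
  | .node _ => mem_nodes_node.2 (.inl rfl)

theorem mem_nodes_of_mem (ht : t ∈ ts) : t ∈ (node ts).nodes :=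
  mem_nodes_node.2 (.inr ⟨t, ht, mem_nodes_self t⟩)

theorem mem_nodes_trans {τ : MTree N} (hμ : μ ∈ t.nodes) (ht : t ∈ τ.nodes) : μ ∈ τ.nodes := by
  induction τ with
  | leaf i => rwa [mem_nodes_leaf.1 ht] at hμ
  | node ts ih =>
    rcases mem_nodes_node.1 ht with rfl | ⟨t', ht', htt'⟩
    · exact hμ
    · exact mem_nodes_node.2 (.inr ⟨t', ht', ih t' ht' htt'⟩)

theorem sizeOf_lt_of_mem (ht : t ∈ ts) : sizeOf t < sizeOf (node ts) := by
  have := List.sizeOf_lt_of_mem ht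
  simp only [MTree.node.sizeOf_spec]; omega

theorem sizeOf_le_of_mem_nodes (hμ : μ ∈ t.nodes) : sizeOf μ ≤ sizeOf t := by
  induction t with
  | leaf i => rw [mem_nodes_leaf.1 hμ]
  | node ts ih =>
    rcases mem_nodes_node.1 hμ with rfl | ⟨t, ht, hμt⟩
    · exact le_rfl
    · exact (ih t ht hμt).trans (sizeOf_lt_of_mem ht).le

theorem node_not_mem_nodes_of_mem (ht : t ∈ ts) : node ts ∉ t.nodes := fun h =>
  (sizeOf_le_of_mem_nodes h).not_gt (sizeOf_lt_of_mem ht)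

theorem leafList_sublist_of_mem_nodes (hμ : μ ∈ t.nodes) : μ.leafList.Sublist t.leafList := by
  induction t with
  | leaf i => rw [mem_nodes_leaf.1 hμ]
  | node ts ih =>
    rcases mem_nodes_node.1 hμ with rfl | ⟨t, ht, hμt⟩
    · exact .refl _
    · rw [leafList_node, List.flatMap]
      exact (ih t ht hμt).trans (List.sublist_flatten_of_mem (List.mem_map_of_mem ht))

theorem Branching.leafList_ne_nil (h : t.Branching) : t.leafList ≠ [] := by
  induction t with
  | leaf i => simp [leafList]
  | node ts ih =>
    obtain ⟨hts, hch⟩ := branching_node.1 h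
    obtain ⟨t, ht⟩ := List.exists_mem_of_ne_nil _ hts
    obtain ⟨i, hi⟩ := List.exists_mem_of_ne_nil _ (ih t ht (hch t ht))
    rw [leafList_node]
    exact List.ne_nil_of_mem (List.mem_flatMap.2 ⟨t, ht, hi⟩)

theorem Branching.of_mem_nodes (h : t.Branching) (hμ : μ ∈ t.nodes) : μ.Branching := by
  induction t with
  | leaf i => rw [mem_nodes_leaf.1 hμ]; trivial
  | node ts ih =>
    rcases mem_nodes_node.1 hμ with rfl | ⟨t, ht, hμt⟩
    · exact h
    · exact ih t ht ((branching_node.1 h).2 t ht) hμt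

/-- The part of `Valid` that is inherited by subtrees. -/
def WellFormed (t : MTree N) : Prop := t.leafList.Nodup ∧ t.Branching

theorem WellFormed.of_mem_nodes (h : t.WellFormed) (hμ : μ ∈ t.nodes) : μ.WellFormed :=
  ⟨(leafList_sublist_of_mem_nodes hμ).nodup h.1, h.2.of_mem_nodes hμ⟩

theorem WellFormed.pairwise_disjoint_nodes (h : (node ts).WellFormed) (μ : MTree N) :
    ts.Pairwise fun a b => ¬(μ ∈ a.nodes ∧ μ ∈ b.nodes) := by
  have hleaves := h.1
  rw [leafList_node, List.nodup_flatMap] at hleaves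
  refine hleaves.2.imp_of_mem fun {a b} ha _ hab ⟨hμa, hμb⟩ => ?_
  obtain ⟨i, hi⟩ := List.exists_mem_of_ne_nil _
    (((branching_node.1 h.2).2 a ha).of_mem_nodes hμa).leafList_ne_nil
  exact hab ((leafList_sublist_of_mem_nodes hμa).subset hi)
    ((leafList_sublist_of_mem_nodes hμb).subset hi)

theorem WellFormed.disjoint_nodes (h : (node ts).WellFormed) (ht : t ∈ ts) (ht' : t' ∈ ts)
    (hne : t ≠ t') (hμ : μ ∈ t.nodes) : μ ∉ t'.nodes := by
  have : Std.Symm fun a b : MTree N => ¬(μ ∈ a.nodes ∧ μ ∈ b.nodes) :=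
    ⟨fun _ _ hab hba => hab hba.symm⟩
  exact fun hμ' => (h.pairwise_disjoint_nodes μ).forall ht ht' hne ⟨hμ, hμ'⟩

end MTree

theorem prod_map_eq_mul_add_of_pairwise {α M : Type*} [CommSemiring M] {l : List α}
    {P : α → Prop} {f f₁ f₂ : α → M} (a : M) (hl : l.Pairwise fun b c => ¬(P b ∧ P c))
    (hex : ∃ b ∈ l, P b) (hP : ∀ b ∈ l, P b → f b = a * f₁ b + f₂ b)
    (hnP : ∀ b ∈ l, ¬P b → f₁ b = f b ∧ f₂ b = f b) :
    (l.map f).prod = a * (l.map f₁).prod + (l.map f₂).prod := by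
  induction l with
  | nil => simp at hex
  | cons b l ih =>
    rw [List.pairwise_cons] at hl
    simp only [List.map_cons, List.prod_cons]
    by_cases hb : P b
    · have hrest : ∀ c ∈ l, ¬P c := fun c hc hPc => hl.1 c hc ⟨hb, hPc⟩
      rw [hP b (.head _) hb, List.map_congr_left fun c hc => (hnP c (.tail _ hc) (hrest c hc)).1,
        List.map_congr_left fun c hc => (hnP c (.tail _ hc) (hrest c hc)).2]
      ring
    · obtain ⟨c, hc, hPc⟩ := hex
      have hcl : c ∈ l := (List.mem_cons.1 hc).resolve_left fun h => hb (h ▸ hPc)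
      obtain ⟨h₁, h₂⟩ := hnP b (.head _) hb
      rw [ih hl.2 ⟨c, hcl, hPc⟩ (fun c hc => hP c (.tail _ hc)) (fun c hc => hnP c (.tail _ hc)),
        h₁, h₂]
      ring

open MTree

section Interm

variable {N : ℕ} {D : Fin N → ℕ} {R : MTree N → ℕ} {W : ∀ ν : MTree N, Fin (R ν) → ℕ → ℝ}
  {t μ ν : MTree N} {ts : List (MTree N)}

theorem interm_leaf (i : Fin N) (r : ℕ) (x : Idx D) :
    interm D R W (.leaf i) r x
      = if h : R (.leaf i) = D i then W (.leaf i) (Fin.cast h.symm (x i)) r else 0 := by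
  rw [interm]

theorem interm_node (ts : List (MTree N)) (r : ℕ) (x : Idx D) :
    interm D R W (.node ts) r x
      = ∑ r' : Fin (R (.node ts)),
          W (.node ts) r' r * (ts.map fun t => interm D R W t r' x).prod := by
  rw [interm]
  exact Finset.sum_congr rfl fun r' _ => by
    rw [List.attach_map_val (f := fun t => interm D R W t r' x)]

theorem replace_self (A : Fin (R μ) → ℕ → ℝ) : replace R W μ A μ = A := by
  simp only [replace, dif_pos, Fin.cast_eq_self]

theorem replace_of_ne (A : Fin (R μ) → ℕ → ℝ) (h : ν ≠ μ) : replace R W μ A ν = W ν :=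
  dif_neg h

theorem replace_eq_self : replace R W μ (W μ) = W := by
  funext ν
  by_cases h : ν = μ
  · subst h; exact replace_self _
  · exact replace_of_ne _ h

theorem went_fin (i : Fin (R μ)) (j : ℕ) : went R W μ i j = W μ i j := dif_pos i.isLt

theorem interm_node_congr {W₁ W₂ : ∀ ν : MTree N, Fin (R ν) → ℕ → ℝ}
    (hW : W₁ (node ts) = W₂ (node ts))
    (h : ∀ t ∈ ts, ∀ r' : Fin (R (node ts)), interm D R W₁ t r' = interm D R W₂ t r') :
    interm D R W₁ (node ts) = interm D R W₂ (node ts) := by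
  funext q x
  rw [interm_node, interm_node, hW]
  exact Finset.sum_congr rfl fun r' _ => congrArg _ (congrArg _ (List.map_congr_left
    fun t ht => by rw [h t ht r']))

theorem interm_congr {W₁ W₂ : ∀ ν : MTree N, Fin (R ν) → ℕ → ℝ}
    (h : ∀ μ ∈ t.nodes, W₁ μ = W₂ μ) : interm D R W₁ t = interm D R W₂ t := by
  induction t generalizing W₁ W₂ with
  | leaf i => funext r x; rw [interm_leaf, interm_leaf, h _ (mem_nodes_self _)]
  | node ts ih =>
    exact interm_node_congr (h _ (mem_nodes_self _)) fun t ht _ => by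
      rw [ih t ht fun μ hμ => h μ (mem_nodes_trans hμ (mem_nodes_of_mem ht))]

theorem interm_replace_of_not_mem (A : Fin (R μ) → ℕ → ℝ) (h : μ ∉ t.nodes) :
    interm D R (replace R W μ A) t = interm D R W t :=
  interm_congr fun _ hν => replace_of_ne A fun he => h (he ▸ hν)

theorem interm_replace_child (A : Fin (R (.node ts)) → ℕ → ℝ) (ht : t ∈ ts) :
    interm D R (replace R W (.node ts) A) t = interm D R W t :=
  interm_replace_of_not_mem A (node_not_mem_nodes_of_mem ht)

theorem interm_replace_smul_add (hwf : t.WellFormed) (hμ : μ ∈ t.nodes) (a : ℝ)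
    (A B : Fin (R μ) → ℕ → ℝ) :
    interm D R (replace R W μ (a • A + B)) t
      = a • interm D R (replace R W μ A) t + interm D R (replace R W μ B) t := by
  induction t with
  | leaf i =>
    obtain rfl := mem_nodes_leaf.1 hμ
    funext r x
    simp only [interm_leaf, replace_self, Pi.add_apply, Pi.smul_apply, smul_eq_mul]
    split <;> simp
  | node ts ih =>
    funext r x
    simp only [interm_node, Pi.add_apply, Pi.smul_apply, smul_eq_mul, Finset.mul_sum,
      ← Finset.sum_add_distrib]
    refine Finset.sum_congr rfl fun r' _ => ?_
    rcases mem_nodes_node.1 hμ with rfl | ⟨t₀, ht₀, hμt₀⟩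
    · have hchildren (X : Fin (R (.node ts)) → ℕ → ℝ) :
          (ts.map fun t => interm D R (replace R W (.node ts) X) t r' x)
            = ts.map fun t => interm D R W t r' x :=
        List.map_congr_left fun t ht => by rw [interm_replace_child X ht]
      simp only [replace_self, hchildren, Pi.add_apply, Pi.smul_apply, smul_eq_mul]
      ring
    · have hne : node ts ≠ μ := fun h => node_not_mem_nodes_of_mem ht₀ (h ▸ hμt₀)
      simp only [replace_of_ne _ hne]
      rw [prod_map_eq_mul_add_of_pairwise a (hwf.pairwise_disjoint_nodes μ) ⟨t₀, ht₀, hμt₀⟩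
        (fun b hb hμb => by rw [ih b hb (hwf.of_mem_nodes (mem_nodes_of_mem hb)) hμb]; rfl)
        (fun b _ hμb => by simp only [interm_replace_of_not_mem _ hμb, and_self])]
      ring

theorem interm_replace_zero (hwf : t.WellFormed) (hμ : μ ∈ t.nodes) :
    interm D R (replace R W μ 0) t = 0 := by
  have h := interm_replace_smul_add (W := W) (D := D) hwf hμ 1 0 0
  rw [one_smul, add_zero, one_smul] at h
  simpa using h

theorem isLinearMap_endT_replace (hwf : t.WellFormed) (hμ : μ ∈ t.nodes) :
    IsLinearMap ℝ fun A : Fin (R μ) → ℕ → ℝ => endT D R (replace R W μ A) t where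
  map_add A B := by
    simpa [endT] using congrFun (interm_replace_smul_add (W := W) (D := D) hwf hμ 1 A B) 0
  map_smul a A := by
    simpa [endT, interm_replace_zero hwf hμ] using
      congrFun (interm_replace_smul_add (W := W) (D := D) hwf hμ a A 0) 0

end Interm

section Parent

variable {N : ℕ} {R : MTree N → ℕ} {T t ν : MTree N} {ss ts : List (MTree N)}

theorem parentIn_node (ts : List (MTree N)) (ν : MTree N) :
    parentIn (node ts) ν
      = if ν ∈ ts then some (node ts) else ts.findSome? fun t => parentIn t ν := by
  rw [parentIn]
  congr 1
  conv_rhs => rw [← List.attach_map_subtype_val ts, List.findSome?_map]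
  rfl

theorem parentIn_eq_none (h : ν ∉ t.nodes) : parentIn t ν = none := by
  induction t with
  | leaf i => rw [parentIn]
  | node ts ih =>
    rw [parentIn_node, if_neg fun hν => h (mem_nodes_of_mem hν), List.findSome?_eq_none_iff]
    exact fun t ht => ih t ht fun hν => h (mem_nodes_trans hν (mem_nodes_of_mem ht))

theorem parentIn_eq_some (hwf : t.WellFormed) (hp : node ss ∈ t.nodes) (hν : ν ∈ ss) :
    parentIn t ν = some (node ss) := by
  have hνp : ν ∈ (node ss).nodes := mem_nodes_of_mem hν
  induction t with
  | leaf i => cases mem_nodes_leaf.1 hp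
  | node ts ih =>
    rw [parentIn_node]
    rcases mem_nodes_node.1 hp with hp | ⟨t₁, ht₁, hp₁⟩
    · rw [if_pos (by rw [← node.inj hp]; exact hν), hp]
    have hνt₁ : ν ∈ t₁.nodes := mem_nodes_trans hνp hp₁
    have hνts : ν ∉ ts := fun hνts => by
      by_cases h : t₁ = ν
      · exact node_not_mem_nodes_of_mem hν (h ▸ hp₁)
      · exact hwf.disjoint_nodes ht₁ hνts h hνt₁ (mem_nodes_self ν)
    rw [if_neg hνts]
    obtain ⟨l₁, l₂, rfl⟩ := List.append_of_mem ht₁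
    refine List.findSome?_eq_some_iff.2 ⟨l₁, t₁, l₂, rfl,
      ih t₁ ht₁ (hwf.of_mem_nodes (mem_nodes_of_mem ht₁)) hp₁, fun t ht => parentIn_eq_none ?_⟩
    have hpw := List.pairwise_append.1 (hwf.pairwise_disjoint_nodes ν)
    exact fun hνt => hpw.2.2 t ht t₁ (.head _) ⟨hνt, hνt₁⟩

theorem Rpar_self (T : MTree N) : Rpar R T T = 1 := if_pos rfl

theorem Rpar_eq_of_mem (hwf : T.WellFormed) (hp : node ss ∈ T.nodes) (hν : ν ∈ ss) :
    Rpar R T ν = R (node ss) := by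
  have hνT : ν ≠ T := by rintro rfl; exact node_not_mem_nodes_of_mem hν hp
  rw [Rpar, if_neg hνT, parentIn_eq_some hwf hp hν]
  rfl

end Parent

section Locality

variable {N : ℕ} {D : Fin N → ℕ} {R : MTree N → ℕ} {W : ∀ ν : MTree N, Fin (R ν) → ℕ → ℝ}
  {T t ν c : MTree N} {ts : List (MTree N)}

theorem interm_replace_self_congr {A A' : Fin (R ν) → ℕ → ℝ} {q : ℕ}
    (hA : ∀ i, A i q = A' i q) :
    interm D R (replace R W ν A) ν q = interm D R (replace R W ν A') ν q := by
  funext x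
  cases ν with
  | leaf i => simp only [interm_leaf, replace_self, hA]
  | node ts =>
    simp only [interm_node, replace_self, hA]
    refine Finset.sum_congr rfl fun r' _ => congrArg _ (congrArg _ ?_)
    exact List.map_congr_left fun t ht => by
      rw [interm_replace_child _ ht, interm_replace_child _ ht]

theorem interm_replace_congr_cols (hwf : T.WellFormed) {A A' : Fin (R ν) → ℕ → ℝ}
    (hA : ∀ i, ∀ j < Rpar R T ν, A i j = A' i j) (htT : t ∈ T.nodes) (hνt : ν ∈ t.nodes)
    (hne : t ≠ ν) : interm D R (replace R W ν A) t = interm D R (replace R W ν A') t := by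
  induction t with
  | leaf i => exact absurd (mem_nodes_leaf.1 hνt).symm hne
  | node ts ih =>
    refine interm_node_congr (by rw [replace_of_ne _ hne, replace_of_ne _ hne]) fun t ht r' => ?_
    by_cases hνt' : ν ∈ t.nodes
    · by_cases htν : t = ν
      · subst htν
        exact interm_replace_self_congr fun i => hA i r' (Rpar_eq_of_mem hwf htT ht ▸ r'.isLt)
      · rw [ih t ht (mem_nodes_trans (mem_nodes_of_mem ht) htT) hνt' htν]
    · rw [interm_replace_of_not_mem _ hνt', interm_replace_of_not_mem _ hνt']

/-- Weight matrices carry columns indexed by all of `ℕ`, but only the first `R_{Pa(ν)}` columns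
of `W^(ν)` enter the end tensor. -/
theorem endT_replace_congr_cols (hwf : T.WellFormed) (hν : ν ∈ T.nodes)
    {A A' : Fin (R ν) → ℕ → ℝ} (hA : ∀ i, ∀ j < Rpar R T ν, A i j = A' i j) :
    endT D R (replace R W ν A) T = endT D R (replace R W ν A') T := by
  by_cases hT : T = ν
  · subst hT
    exact interm_replace_self_congr fun i => hA i 0 (by rw [Rpar_self]; exact one_pos)
  · exact congrFun (interm_replace_congr_cols hwf hA (mem_nodes_self T) hν hT) 0

theorem interm_congr_of_interm_eq (hwf : t.WellFormed) (hν : ν ∈ t.nodes)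
    {W₁ W₂ : ∀ μ : MTree N, Fin (R μ) → ℕ → ℝ} (hloc : interm D R W₁ ν = interm D R W₂ ν)
    (hout : ∀ μ, μ ∉ ν.nodes → W₁ μ = W₂ μ) : interm D R W₁ t = interm D R W₂ t := by
  induction t with
  | leaf i => rwa [← mem_nodes_leaf.1 hν]
  | node ts ih =>
    rcases mem_nodes_node.1 hν with rfl | ⟨t₀, ht₀, hνt₀⟩
    · exact hloc
    have hne : node ts ∉ ν.nodes := fun h =>
      node_not_mem_nodes_of_mem ht₀ (mem_nodes_trans h hνt₀)
    refine interm_node_congr (hout _ hne) fun t ht _ => ?_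
    by_cases hνt : ν ∈ t.nodes
    · rw [ih t ht (hwf.of_mem_nodes (mem_nodes_of_mem ht)) hνt]
    · rw [interm_congr fun μ hμ => hout μ fun hμν => hwf.disjoint_nodes ht ht₀
        (fun h => hνt (h ▸ hνt₀)) hμ (mem_nodes_trans hμν hνt₀)]

end Locality

section LocalComponent

variable {N : ℕ} (D : Fin N → ℕ) {R : MTree N → ℕ}

/-- `σ^(ν,r) · Ĉ^(ν,r)`, the end tensor of the `(ν,r)`'th local component alone. -/
noncomputable def lcTensor (R : MTree N → ℕ) (W : ∀ ν : MTree N, Fin (R ν) → ℕ → ℝ)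
    (T ν : MTree N) (r : ℕ) : Idx D → ℝ :=
  endT D R (replace R W ν (padRow R W ν r)) T

variable {D} {W : ∀ ν : MTree N, Fin (R ν) → ℕ → ℝ} {T c : MTree N} {ts : List (MTree N)}

theorem interm_replace_padRow_self (r : Fin (R (node ts))) (q : ℕ) (x : Idx D) :
    interm D R (replace R W (node ts) (padRow R W (node ts) r)) (node ts) q x
      = W (node ts) r q * (ts.map fun t => interm D R W t r x).prod := by
  rw [interm_node, Finset.sum_eq_single r (fun r' _ hr' => ?_) (by simp), replace_self]
  · simp only [padRow]
    exact congrArg _ (congrArg _ (List.map_congr_left fun t ht => by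
      rw [interm_replace_child _ ht]))
  · simp only [replace_self, padRow, if_neg (Fin.val_injective.ne hr'), zero_mul]

theorem interm_replace_padCol_self (r q : ℕ) (x : Idx D) :
    interm D R (replace R W c (padCol R W c r)) c q x
      = if q = r then interm D R W c r x else 0 := by
  cases c with
  | leaf i =>
    simp only [interm_leaf, replace_self, padCol]
    split_ifs <;> simp_all
  | node ss =>
    simp only [interm_node, replace_self, padCol]
    split_ifs with hq
    · subst hq
      exact Finset.sum_congr rfl fun r' _ => congrArg _ (congrArg _ (List.map_congr_left
        fun t ht => by rw [interm_replace_child _ ht]))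
    · simp

theorem interm_replace_padCol_parent (hwf : (node ts).WellFormed) (r : Fin (R (node ts)))
    (hc : c ∈ ts) (q : ℕ) (x : Idx D) :
    interm D R (replace R W c (padCol R W c r)) (node ts) q x
      = W (node ts) r q * (ts.map fun t => interm D R W t r x).prod := by
  have hne : node ts ≠ c := fun h => node_not_mem_nodes_of_mem hc (h ▸ mem_nodes_self c)
  have hother (t : MTree N) (ht : t ∈ ts) (htc : t ≠ c) :
      interm D R (replace R W c (padCol R W c r)) t = interm D R W t :=
    interm_replace_of_not_mem _ (hwf.disjoint_nodes hc ht htc.symm (mem_nodes_self c))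
  rw [interm_node, replace_of_ne _ hne, Finset.sum_eq_single r (fun r' _ hr' => ?_) (by simp)]
  · refine congrArg _ (congrArg _ (List.map_congr_left fun t ht => ?_))
    by_cases htc : t = c
    · subst htc; rw [interm_replace_padCol_self, if_pos rfl]
    · rw [hother t ht htc]
  · refine mul_eq_zero_of_right _ (List.prod_eq_zero (List.mem_map.2 ⟨c, hc, ?_⟩))
    rw [interm_replace_padCol_self, if_neg (Fin.val_injective.ne hr')]

theorem endT_replace_padCol (hwf : T.WellFormed) (hp : node ts ∈ T.nodes)
    (r : Fin (R (node ts))) (hc : c ∈ ts) :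
    endT D R (replace R W c (padCol R W c r)) T = lcTensor D R W T (node ts) r := by
  refine congrFun (interm_congr_of_interm_eq hwf hp ?_ fun μ hμ => ?_) 0
  · funext q x
    rw [interm_replace_padCol_parent (hwf.of_mem_nodes hp) r hc, interm_replace_padRow_self]
  · have hμc : μ ≠ c := by rintro rfl; exact hμ (mem_nodes_of_mem hc)
    have hμν : μ ≠ node ts := by rintro rfl; exact hμ (mem_nodes_self _)
    rw [replace_of_ne _ hμc, replace_of_ne _ hμν]

end LocalComponent

theorem hasDerivAt_comp_add_sub_smul {E : Type*} [NormedAddCommGroup E] [NormedSpace ℝ E]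
    {L : E → ℝ} {A : E} (hL : DifferentiableAt ℝ L A) (V : E) (s₀ : ℝ) :
    HasDerivAt (fun s => L (A + (s - s₀) • V)) (fderiv ℝ L A V) s₀ := by
  have hline : HasDerivAt (fun s : ℝ => A + (s - s₀) • V) V s₀ := by
    simpa using (((hasDerivAt_id s₀).sub_const s₀).smul_const V).const_add A
  exact hL.hasFDerivAt.comp_hasDerivAt_of_eq s₀ hline (by simp)

section Gradient

variable {N : ℕ} {D : Fin N → ℕ} {L : (Idx D → ℝ) → ℝ} {R : MTree N → ℕ}
  {W : ∀ ν : MTree N, Fin (R ν) → ℕ → ℝ} {T μ : MTree N}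

theorem tgrad_eq_fderiv (hL : Differentiable ℝ L) (A : Idx D → ℝ) (x : Idx D) :
    tgrad D L A x = fderiv ℝ L A (Pi.single x 1) := by
  have hupd : (fun s => L (Function.update A x s))
      = fun s => L (A + (s - A x) • Pi.single x (1 : ℝ)) := by
    funext s
    congr 1
    funext y
    rcases eq_or_ne y x with rfl | hy <;> simp [*]
  rw [tgrad, hupd]
  exact (hasDerivAt_comp_add_sub_smul (hL A) _ _).deriv

theorem fderiv_eq_tinner (hL : Differentiable ℝ L) (A V : Idx D → ℝ) :
    fderiv ℝ L A V = tinner D (tgrad D L A) V := by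
  conv_lhs => rw [pi_eq_sum_univ' V]
  simp only [map_sum, map_smul, tinner, tgrad_eq_fderiv hL, smul_eq_mul, mul_comm]

def entryMat {ι : Type*} [DecidableEq ι] (i : ι) (j : ℕ) : ι → ℕ → ℝ :=
  fun i' j' => if i' = i ∧ j' = j then 1 else 0

theorem upd_eq_replace (i : Fin (R μ)) (j : ℕ) (s : ℝ) :
    upd R W μ i j s = replace R W μ ((s - W μ i j) • entryMat i j + W μ) := by
  funext ν i' j'
  by_cases hν : ν = μ
  · subst hν
    by_cases h : i' = i ∧ j' = j
    · obtain ⟨rfl, rfl⟩ := h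
      simp [upd, replace_self, entryMat]
    · simp [upd, replace_self, entryMat, Fin.val_inj, h]
  · simp [upd, replace_of_ne _ hν, hν]

theorem dObj_eq_tinner (hL : Differentiable ℝ L) (hwf : T.WellFormed) (hμ : μ ∈ T.nodes)
    (i : Fin (R μ)) (j : ℕ) :
    dObj D L R T W μ i j
      = tinner D (tgrad D L (endT D R W T)) (endT D R (replace R W μ (entryMat i j)) T) := by
  have hlin := isLinearMap_endT_replace (D := D) (W := W) hwf hμ
  have hobj : (fun s => obj D L R T (upd R W μ i j s)) = fun s =>
      L (endT D R W T + (s - W μ i j) • endT D R (replace R W μ (entryMat i j)) T) := by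
    funext s
    rw [obj, upd_eq_replace, hlin.map_add, hlin.map_smul, replace_eq_self, add_comm]
  rw [dObj, hobj, went_fin, (hasDerivAt_comp_add_sub_smul (hL _) _ _).deriv, fderiv_eq_tinner hL]

theorem endT_replace_sum_smul (hwf : T.WellFormed) (hμ : μ ∈ T.nodes) {ι : Type*}
    (s : Finset ι) (c : ι → ℝ) (A : ι → Fin (R μ) → ℕ → ℝ) :
    endT D R (replace R W μ (∑ k ∈ s, c k • A k)) T
      = ∑ k ∈ s, c k • endT D R (replace R W μ (A k)) T := by
  simpa [map_smul] using map_sum ((isLinearMap_endT_replace hwf hμ).mk' _) (fun k => c k • A k) s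

theorem sum_smul_endT_replace_entryMat_row (hwf : T.WellFormed) (hμ : μ ∈ T.nodes)
    (r : Fin (R μ)) :
    ∑ j : Fin (Rpar R T μ), W μ r j • endT D R (replace R W μ (entryMat r (j : ℕ))) T
      = lcTensor D R W T μ r := by
  rw [← endT_replace_sum_smul hwf hμ, lcTensor]
  refine endT_replace_congr_cols hwf hμ fun i j hj => ?_
  simp only [Finset.sum_apply, Pi.smul_apply, entryMat, smul_eq_mul, mul_ite, mul_one,
    mul_zero, padRow, Fin.val_inj]
  rw [Finset.sum_eq_single ⟨j, hj⟩ (fun j' _ hj' => if_neg fun h => hj' (Fin.ext h.2.symm))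
    (by simp)]
  by_cases hi : i = r <;> simp [hi]

theorem sum_smul_endT_replace_entryMat_col (hwf : T.WellFormed) {ts : List (MTree N)} {c : MTree N}
    (hp : node ts ∈ T.nodes) (r : Fin (R (node ts))) (hc : c ∈ ts) :
    ∑ i : Fin (R c), W c i r • endT D R (replace R W c (entryMat i (r : ℕ))) T
      = lcTensor D R W T (node ts) r := by
  rw [← endT_replace_sum_smul hwf (mem_nodes_trans (mem_nodes_of_mem hc) hp),
    ← endT_replace_padCol hwf hp r hc]
  congr 3
  funext i j
  simp only [Finset.sum_apply, Pi.smul_apply, entryMat, smul_eq_mul, mul_ite, mul_one,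
    mul_zero, padCol]
  rw [Finset.sum_eq_single i (fun i' _ hi' => if_neg fun h => hi' h.1.symm) (by simp)]
  simp

end Gradient

section Flow

variable {N : ℕ} {D : Fin N → ℕ} {L : (Idx D → ℝ) → ℝ} {R : MTree N → ℕ}
  {Wt : ℝ → ∀ ν : MTree N, Fin (R ν) → ℕ → ℝ} {T ν c : MTree N} {ts : List (MTree N)} {s : ℝ}

theorem hasDerivAt_sum_sq {ι : Type*} [Fintype ι] {e : ι → ℝ → ℝ} {B : ι → Idx D → ℝ}
    {G : Idx D → ℝ} (he : ∀ k, HasDerivAt (e k) (-tinner D G (B k)) s) :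
    HasDerivAt (fun u => ∑ k, e k u ^ 2) (-2 * tinner D G (∑ k, e k s • B k)) s := by
  refine (HasDerivAt.fun_sum fun k _ => (he k).fun_pow 2).congr_deriv ?_
  change _ = -2 * G ⬝ᵥ ∑ k, e k s • B k
  rw [dotProduct_sum, Finset.mul_sum]
  refine Finset.sum_congr rfl fun k _ => ?_
  rw [dotProduct_smul, smul_eq_mul, tinner, dotProduct]
  push_cast
  ring

theorem hasDerivAt_rowSq (hL : Differentiable ℝ L) (hwf : T.WellFormed) (hν : ν ∈ T.nodes)
    (r : Fin (R ν)) (hflow : GradFlow D L R T Wt) (hs : 0 ≤ s) :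
    HasDerivAt (fun u => rowSq R (Wt u) T ν r)
      (-2 * tinner D (tgrad D L (endT D R (Wt s) T)) (lcTensor D R (Wt s) T ν r)) s := by
  simp only [rowSq, went_fin]
  rw [← sum_smul_endT_replace_entryMat_row hwf hν r]
  exact hasDerivAt_sum_sq fun j => by
    simpa only [dObj_eq_tinner hL hwf hν] using hflow ν r j s hs

theorem hasDerivAt_colSq (hL : Differentiable ℝ L) (hwf : T.WellFormed) (hp : node ts ∈ T.nodes)
    (r : Fin (R (node ts))) (hc : c ∈ ts) (hflow : GradFlow D L R T Wt) (hs : 0 ≤ s) :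
    HasDerivAt (fun u => colSq R (Wt u) c r)
      (-2 * tinner D (tgrad D L (endT D R (Wt s) T)) (lcTensor D R (Wt s) T (node ts) r)) s := by
  simp only [colSq]
  rw [← sum_smul_endT_replace_entryMat_col hwf hp r hc]
  exact hasDerivAt_sum_sq fun i => by
    simpa only [dObj_eq_tinner hL hwf (mem_nodes_trans (mem_nodes_of_mem hc) hp)] using
      hflow c i r s hs

theorem colSq_eq_rowSq_of_gradFlow (hL : Differentiable ℝ L) (hwf : T.WellFormed)
    (hp : node ts ∈ T.nodes) (r : Fin (R (node ts))) (hc : c ∈ ts)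
    (hflow : GradFlow D L R T Wt) (h0 : colSq R (Wt 0) c r = rowSq R (Wt 0) T (node ts) r)
    {t : ℝ} (ht : 0 ≤ t) : colSq R (Wt t) c r = rowSq R (Wt t) T (node ts) r := by
  have hderiv (u : ℝ) (hu : 0 ≤ u) :
      HasDerivAt (fun u => colSq R (Wt u) c r - rowSq R (Wt u) T (node ts) r) 0 u := by
    simpa using (hasDerivAt_colSq hL hwf hp r hc hflow hu).fun_sub
      (hasDerivAt_rowSq hL hwf hp r hflow hu)
  have hconst := constant_of_has_deriv_right_zero
    (fun u hu => (hderiv u hu.1).continuousAt.continuousWithinAt)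
    (fun u hu => (hderiv u hu.1).hasDerivWithinAt) t ⟨ht, le_rfl⟩
  simp only [h0, sub_self, sub_eq_zero] at hconst
  exact hconst

end Flow

section RealAnalysis

open Asymptotics Filter Topology

variable {t : ℝ}

theorem hasDerivAt_list_prod_of_eq {ι : Type*} (l : List ι) {f : ι → ℝ → ℝ} {d v : ℝ}
    (hf : ∀ i ∈ l, HasDerivAt (f i) d t) (hv : ∀ i ∈ l, f i t = v) :
    HasDerivAt (fun u => (l.map fun i => f i u).prod) (l.length * d * v ^ (l.length - 1)) t := by
  induction l with
  | nil => simpa using hasDerivAt_const t (1 : ℝ)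
  | cons a l ih =>
    have hprod : (l.map fun i => f i t).prod = v ^ l.length := by
      rw [List.prod_eq_pow_card _ v fun x hx => by
        obtain ⟨i, hi, rfl⟩ := List.mem_map.1 hx; exact hv i (.tail _ hi), List.length_map]
    simp only [List.map_cons, List.prod_cons]
    refine ((hf a (.head _)).fun_mul (ih (fun i hi => hf i (.tail _ hi))
      fun i hi => hv i (.tail _ hi))).congr_deriv ?_
    rw [hprod, hv a (.head _)]
    cases l
    · simp
    · simp [pow_succ]; ring

theorem hasDerivAt_sqrt_mul_list_prod {ι : Type*} (l : List ι) {f : ℝ → ℝ} {g : ι → ℝ → ℝ}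
    {d : ℝ} (hf : HasDerivAt f d t) (hg : ∀ i ∈ l, HasDerivAt (g i) d t)
    (hgf : ∀ i ∈ l, g i t = f t) (hpos : 0 < f t) :
    HasDerivAt (fun u => √(f u) * (l.map fun i => √(g i u)).prod)
      ((l.length + 1) * (d / (2 * √(f t))) * √(f t) ^ l.length) t := by
  have hprod := hasDerivAt_list_prod_of_eq l (f := fun i u => √(g i u))
    (fun i hi => by simpa only [hgf i hi] using (hg i hi).sqrt (by rw [hgf i hi]; exact hpos.ne'))
    fun i hi => by rw [hgf i hi]
  refine ((hf.sqrt hpos.ne').fun_mul hprod).congr_deriv ?_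
  rw [List.prod_eq_pow_card _ (√(f t)) fun x hx => by
    obtain ⟨i, hi, rfl⟩ := List.mem_map.1 hx; rw [hgf i hi], List.length_map]
  cases l
  · simp
  · simp [pow_succ]; ring

theorem isBigO_sqrt_sum_sq {ι : Type*} [Fintype ι] {e : ι → ℝ → ℝ} {d : ι → ℝ}
    (he : ∀ k, HasDerivAt (e k) (d k) t) (h0 : ∑ k, e k t ^ 2 = 0) :
    (fun u => √(∑ k, e k u ^ 2)) =O[𝓝 t] (· - t) := by
  have he0 (k : ι) : e k t = 0 :=
    pow_eq_zero_iff two_ne_zero |>.1 <|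
      congrFun ((Fintype.sum_eq_zero_iff_of_nonneg fun k => sq_nonneg (e k t)).1 h0) k
  have hbound (u : ℝ) : √(∑ k, e k u ^ 2) ≤ ∑ k, |e k u| := by
    rw [Real.sqrt_le_left (Finset.sum_nonneg fun k _ => abs_nonneg _)]
    simpa only [sq_abs] using Finset.sum_sq_le_sq_sum_of_nonneg fun k _ => abs_nonneg (e k u)
  have hsum : (fun u => ∑ k, |e k u|) =O[𝓝 t] (· - t) :=
    IsBigO.fun_sum fun k _ => by simpa [he0 k] using (he k).isBigO_sub.abs_left
  refine (isBigO_of_le _ fun u => ?_).trans hsum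
  simp only [Real.norm_eq_abs, abs_of_nonneg (Real.sqrt_nonneg _),
    abs_of_nonneg (Finset.sum_nonneg fun k _ => abs_nonneg (e k u))]
  exact hbound u

theorem hasDerivAt_mul_of_isBigO_sub {f g : ℝ → ℝ} (hf : f =O[𝓝 t] (· - t))
    (hg : g =O[𝓝 t] (· - t)) : HasDerivAt (fun u => f u * g u) 0 t := by
  have hft : f t = 0 := (hf.eq_zero_imp.self_of_nhds) (sub_self t)
  rw [hasDerivAt_iff_isLittleO, hft, zero_mul]
  simp only [sub_zero, smul_zero]
  refine (hf.mul hg).trans_isLittleO ?_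
  refine (isBigO_of_le _ fun u => ?_).trans_isLittleO (isLittleO_pow_sub_sub t one_lt_two)
  simp [sq]

end RealAnalysis

section LocalComponentNorm

open Asymptotics Filter Topology

variable {N : ℕ} {D : Fin N → ℕ} {L : (Idx D → ℝ) → ℝ} {R : MTree N → ℕ}
  {W : ∀ ν : MTree N, Fin (R ν) → ℕ → ℝ} {Wt : ℝ → ∀ ν : MTree N, Fin (R ν) → ℕ → ℝ}
  {T ν : MTree N} {ts : List (MTree N)} {r : ℕ} {t : ℝ}

theorem rowSq_nonneg : 0 ≤ rowSq R W T ν r := Finset.sum_nonneg fun _ _ => sq_nonneg _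

theorem sigmaLoc_eq_pow (hbal : ∀ c ∈ ts, colSq R W c r = rowSq R W T (node ts) r) :
    sigmaLoc R W T (node ts) r = √(rowSq R W T (node ts) r) ^ (ts.length + 1) := by
  rw [sigmaLoc, children, List.prod_eq_pow_card _ _ fun x hx => ?_, List.length_map, pow_succ']
  obtain ⟨c, hc, rfl⟩ := List.mem_map.1 hx
  rw [hbal c hc]

theorem hatC_eq_smul (hwf : T.WellFormed) (hν : ν ∈ T.nodes) (hσ : sigmaLoc R W T ν r ≠ 0) :
    hatC D R W T ν r = (sigmaLoc R W T ν r)⁻¹ • lcTensor D R W T ν r := by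
  rw [hatC, if_neg hσ, lcTensor, ← (isLinearMap_endT_replace hwf hν).map_smul]
  congr 2
  funext i j
  simp [padRow]

theorem sigmaLoc_rpow_mul_tinner_hatC (hwf : T.WellFormed) (hν : node ts ∈ T.nodes)
    (Γ : Idx D → ℝ) (hbal : ∀ c ∈ ts, colSq R W c r = rowSq R W T (node ts) r)
    (hpos : 0 < rowSq R W T (node ts) r) :
    sigmaLoc R W T (node ts) r ^ ((2 : ℝ) - 2 / (ts.length + 1 : ℝ)) * (ts.length + 1 : ℝ) *
        tinner D (fun x => -Γ x) (hatC D R W T (node ts) r)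
      = (ts.length + 1) * (-2 * tinner D Γ (lcTensor D R W T (node ts) r) /
          (2 * √(rowSq R W T (node ts) r))) * √(rowSq R W T (node ts) r) ^ ts.length := by
  set v := √(rowSq R W T (node ts) r)
  have hv : 0 < v := Real.sqrt_pos.2 hpos
  have hσ : sigmaLoc R W T (node ts) r = v ^ (ts.length + 1) := sigmaLoc_eq_pow hbal
  have hinner (c : ℝ) (X : Idx D → ℝ) :
      tinner D (fun x => -Γ x) (c • X) = -(c * tinner D Γ X) := by
    simp only [tinner, Pi.smul_apply, smul_eq_mul, Finset.mul_sum, ← Finset.sum_neg_distrib]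
    exact Finset.sum_congr rfl fun x _ => by ring
  have hexp : ((ts.length + 1 : ℕ) : ℝ) * ((2 : ℝ) - 2 / (ts.length + 1 : ℝ))
      = ((2 * ts.length : ℕ) : ℝ) := by
    push_cast
    field_simp
    ring
  have hrpow :
      (v ^ (ts.length + 1)) ^ ((2 : ℝ) - 2 / (ts.length + 1 : ℝ)) = v ^ (2 * ts.length) := by
    rw [← Real.rpow_natCast, ← Real.rpow_mul hv.le, hexp, Real.rpow_natCast]
  rw [hatC_eq_smul hwf hν (by rw [hσ]; positivity), hinner, hσ, hrpow]
  field_simp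
  ring

theorem hasDerivAt_sigmaLoc_of_rowSq_eq_zero (hL : Differentiable ℝ L) (hwf : T.WellFormed)
    (hp : node ts ∈ T.nodes) (r : Fin (R (node ts))) (hflow : GradFlow D L R T Wt) (ht : 0 ≤ t)
    (hts : ts ≠ []) (hbal : ∀ c ∈ ts, colSq R (Wt t) c r = rowSq R (Wt t) T (node ts) r)
    (h0 : rowSq R (Wt t) T (node ts) r = 0) :
    HasDerivAt (fun u => sigmaLoc R (Wt u) T (node ts) r) 0 t := by
  obtain ⟨c₀, cs, rfl⟩ := List.exists_cons_of_ne_nil hts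
  have hrow : (fun u => √(rowSq R (Wt u) T (node (c₀ :: cs)) r)) =O[𝓝 t] (· - t) := by
    simp only [rowSq, went_fin] at h0 ⊢
    exact isBigO_sqrt_sum_sq (fun j => hflow _ r j t ht) h0
  have hcol : (fun u => √(colSq R (Wt u) c₀ r)) =O[𝓝 t] (· - t) := by
    have h0' := (hbal c₀ (.head _)).trans h0
    simp only [colSq] at h0' ⊢
    exact isBigO_sqrt_sum_sq (fun i => hflow c₀ i r t ht) h0'
  have hrest := (tendsto_list_prod cs fun c hc =>
    (hasDerivAt_colSq hL hwf hp r (.tail _ hc) hflow ht).continuousAt.sqrt).isBigO_one ℝ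
  simp only [sigmaLoc, children, List.map_cons, List.prod_cons]
  exact hasDerivAt_mul_of_isBigO_sub hrow ((hcol.mul hrest).congr_right fun u => mul_one _)

end LocalComponentNorm

end HTF

open HTF HTF.MTree in
theorem statement11_general {N : ℕ} (D : Fin N → ℕ) (L : (Idx D → ℝ) → ℝ)
    (hL : Differentiable ℝ L)
    (T : MTree N) (hT : T.Valid)
    (R : MTree N → ℕ)
    (Wt : ℝ → ∀ ν : MTree N, Fin (R ν) → ℕ → ℝ)
    (hflow : GradFlow D L R T Wt)
    (hbal : ∀ ν' ∈ T.nodes, ν'.IsInterior → ∀ r' : Fin (R ν'), ∀ c ∈ ν'.children,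
      colSq R (Wt 0) c (r' : ℕ) = rowSq R (Wt 0) T ν' (r' : ℕ))
    (ν : MTree N) (hν : ν ∈ T.nodes) (hint : ν.IsInterior) (r : Fin (R ν))
    (t : ℝ) (ht : 0 ≤ t) :
    HasDerivAt (fun s : ℝ => sigmaLoc R (Wt s) T ν (r : ℕ))
      (sigmaLoc R (Wt t) T ν (r : ℕ) ^ ((2 : ℝ) - 2 / (ν.children.length + 1 : ℝ)) *
        (ν.children.length + 1 : ℝ) *
        tinner D (fun x => - tgrad D L (endT D R (Wt t) T) x) (hatC D R (Wt t) T ν (r : ℕ))) t := by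
  obtain ⟨hnd, -, hbr⟩ := hT
  have hwf : T.WellFormed := ⟨hnd, hbr⟩
  cases ν with
  | leaf i => exact hint.elim
  | node ts =>
    simp only [children]
    have hts : ts ≠ [] := (branching_node.1 (hbr.of_mem_nodes hν)).1
    have hbalt (c : MTree N) (hc : c ∈ ts) : colSq R (Wt t) c r = rowSq R (Wt t) T (node ts) r :=
      colSq_eq_rowSq_of_gradFlow hL hwf hν r hc hflow (hbal _ hν trivial r c hc) ht
    rcases rowSq_nonneg.eq_or_lt with h0 | hpos
    · have hσ : sigmaLoc R (Wt t) T (node ts) r = 0 := by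
        rw [sigmaLoc_eq_pow hbalt, ← h0, Real.sqrt_zero, zero_pow (Nat.succ_ne_zero _)]
      have hexp : (2 : ℝ) - 2 / (ts.length + 1 : ℝ) ≠ 0 := by
        have : (1 : ℝ) ≤ ts.length := Nat.one_le_cast.2 (List.length_pos_iff.2 hts)
        have : (2 : ℝ) / (ts.length + 1) ≤ 1 := by rw [div_le_one (by positivity)]; linarith
        linarith
      rw [hσ, Real.zero_rpow hexp, zero_mul, zero_mul]
      exact hasDerivAt_sigmaLoc_of_rowSq_eq_zero hL hwf hν r hflow ht hts hbalt h0.symm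
    · rw [sigmaLoc_rpow_mul_tinner_hatC hwf hν _ hbalt hpos]
      exact hasDerivAt_sqrt_mul_list_prod ts (hasDerivAt_rowSq hL hwf hν r hflow ht)
        (fun c hc => hasDerivAt_colSq hL hwf hν r hc hflow ht) hbalt hpos

open HTF HTF.MTree in
/-- Theorem 1 in the paper: under gradient flow with unbalancedness
magnitude zero at initialization, the norm of each local component evolves by
`d/dt σ^(ν,r)(t) = σ^(ν,r)(t)^{2 - 2/L_ν} · L_ν · ⟨-∇L_H(W_H(t)), Ĉ^(ν,r)(t)⟩`,
where `L_ν = |C(ν)| + 1`. -/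
theorem statement11 {N : ℕ} (D : Fin N → ℕ) (L : (Idx D → ℝ) → ℝ)
    (hL : Differentiable ℝ L) (hLs : LocSmooth D L) (hL0 : ∀ A, 0 ≤ L A)
    (T : MTree N) (hT : T.Valid)
    (R : MTree N → ℕ) (hR : ∀ i : Fin N, R (MTree.leaf i) = D i)
    (Wt : ℝ → ∀ ν : MTree N, Fin (R ν) → ℕ → ℝ)
    (hflow : GradFlow D L R T Wt)
    (hbal : ∀ ν' ∈ T.nodes, ν'.IsInterior → ∀ r' : Fin (R ν'), ∀ c ∈ ν'.children,
      colSq R (Wt 0) c (r' : ℕ) = rowSq R (Wt 0) T ν' (r' : ℕ))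
    (ν : MTree N) (hν : ν ∈ T.nodes) (hint : ν.IsInterior) (r : Fin (R ν))
    (t : ℝ) (ht : 0 ≤ t) :
    HasDerivAt (fun s : ℝ => sigmaLoc R (Wt s) T ν (r : ℕ))
      (sigmaLoc R (Wt t) T ν (r : ℕ) ^ ((2 : ℝ) - 2 / (ν.children.length + 1 : ℝ)) *
        (ν.children.length + 1 : ℝ) *
        tinner D (fun x => - tgrad D L (endT D R (Wt t) T) x) (hatC D R (Wt t) T ν (r : ℕ))) t :=
  statement11_general D L hL T hT R Wt hflow hbal ν hν hint r t ht
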